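/- Theorem (distinct constructors are inequivalent): let C and D be constructors and v, w values. If C ≠ D, then C[v] ≢ D[w] (i.e. C[v] and D[w] are not observationally equivalent). -/

import Mathlib

namespace CBV

/-! ## Syntax: values, terms, stacks, processes of the call-by-value λμ-calculus.
    λ-variables, μ-variables, term variables, labels and constructors are all
    represented by natural numbers. -/

mutual
  /-- Values: `x`, `λx.t`, `C[v]`, `{lᵢ = vᵢ}`. -/
  inductive Val : Type where
    | var : ℕ → Val                      -- λ-variable x
    | lam : ℕ → Trm → Val                -- λx.t
    | cns : ℕ → Val → Val                -- C[v]
    | rcd : Flds → Val                   -- {lᵢ = vᵢ}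
  /-- Record fields: a finite list of (label, value) pairs. -/
  inductive Flds : Type where
    | nil : Flds
    | cons : ℕ → Val → Flds → Flds
  /-- Terms: `a`, `v`, `t u`, `μα.t`, `p`, `v.l`, `case_v [Cᵢ[xᵢ] → tᵢ]`, `δ_{v,w}`. -/
  inductive Trm : Type where
    | tvar : ℕ → Trm                     -- term variable a
    | val : Val → Trm
    | app : Trm → Trm → Trm
    | mu : ℕ → Trm → Trm                 -- μα.t
    | prc : Proc → Trm
    | prj : Val → ℕ → Trm                -- v.l
    | cse : Val → Brs → Trm              -- case_v [...]
    | dlt : Val → Val → Trm              -- δ_{v,w}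
  /-- Case branches: a finite list of (constructor, bound λ-variable, body). -/
  inductive Brs : Type where
    | nil : Brs
    | cons : ℕ → ℕ → Trm → Brs → Brs
  /-- Stacks: `α`, `v.π`, `[t]π`. -/
  inductive Stk : Type where
    | svar : ℕ → Stk                     -- stack (μ-)variable α
    | push : Val → Stk → Stk             -- v.π
    | frame : Trm → Stk → Stk            -- [t]π
  /-- Processes: `t ∗ π`. -/
  inductive Proc : Type where
    | mk : Trm → Stk → Proc
end

/-- Lookup of a label in a record. -/
def Flds.lookup : Flds → ℕ → Option Val
  | .nil, _ => none
  | .cons l v fs, k => if l = k then some v else fs.lookup k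

/-- Lookup of a constructor among case branches, returning the bound variable and body. -/
def Brs.lookup : Brs → ℕ → Option (ℕ × Trm)
  | .nil, _ => none
  | .cons c x t bs, k => if c = k then some (x, t) else bs.lookup k

/-- A substitution maps λ-variables to values, μ-variables to stacks and
    term variables to terms (totally; the identity outside its support). -/
structure Subst : Type where
  lamS : ℕ → Val
  muS  : ℕ → Stk
  trmS : ℕ → Trm

/-- The identity substitution. -/
def Subst.id : Subst := ⟨Val.var, Stk.svar, Trm.tvar⟩

/-- The substitution [x := v] of a single λ-variable. -/
def subst1Lam (x : ℕ) (v : Val) : Subst :=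
  { Subst.id with lamS := Function.update Val.var x v }

/-- The substitution [α := π] of a single μ-variable. -/
def subst1Mu (α : ℕ) (π : Stk) : Subst :=
  { Subst.id with muS := Function.update Stk.svar α π }

/-- The substitution [a := t] of a single term variable. -/
def subst1Trm (a : ℕ) (t : Trm) : Subst :=
  { Subst.id with trmS := Function.update Trm.tvar a t }

/-- Remove a λ-variable from the support of a substitution (used under binders). -/
def Subst.skipLam (σ : Subst) (x : ℕ) : Subst :=
  { σ with lamS := Function.update σ.lamS x (Val.var x) }

/-- Remove a μ-variable from the support of a substitution (used under binders). -/
def Subst.skipMu (σ : Subst) (α : ℕ) : Subst :=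
  { σ with muS := Function.update σ.muS α (Stk.svar α) }

mutual
  /-- Application of a substitution to a value. -/
  def substVal (σ : Subst) : Val → Val
    | .var x => σ.lamS x
    | .lam x t => .lam x (substTrm (σ.skipLam x) t)
    | .cns c v => .cns c (substVal σ v)
    | .rcd fs => .rcd (substFlds σ fs)
  /-- Application of a substitution to record fields. -/
  def substFlds (σ : Subst) : Flds → Flds
    | .nil => .nil
    | .cons l v fs => .cons l (substVal σ v) (substFlds σ fs)
  /-- Application of a substitution to a term. -/
  def substTrm (σ : Subst) : Trm → Trm
    | .tvar a => σ.trmS a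
    | .val v => .val (substVal σ v)
    | .app t u => .app (substTrm σ t) (substTrm σ u)
    | .mu α t => .mu α (substTrm (σ.skipMu α) t)
    | .prc p => .prc (substPrc σ p)
    | .prj v l => .prj (substVal σ v) l
    | .cse v bs => .cse (substVal σ v) (substBrs σ bs)
    | .dlt v w => .dlt (substVal σ v) (substVal σ w)
  /-- Application of a substitution to case branches. -/
  def substBrs (σ : Subst) : Brs → Brs
    | .nil => .nil
    | .cons c x t bs => .cons c x (substTrm (σ.skipLam x) t) (substBrs σ bs)
  /-- Application of a substitution to a stack. -/
  def substStk (σ : Subst) : Stk → Stk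
    | .svar α => σ.muS α
    | .push v π => .push (substVal σ v) (substStk σ π)
    | .frame t π => .frame (substTrm σ t) (substStk σ π)
  /-- Application of a substitution to a process. -/
  def substPrc (σ : Subst) : Proc → Proc
    | .mk t π => .mk (substTrm σ t) (substStk σ π)
end

/-! ## The reduction relation (≻). -/

/-- The reduction relation (≻) of the Krivine abstract machine. -/
inductive Red : Proc → Proc → Prop where
  | app (t u : Trm) (π : Stk) :
      Red (.mk (.app t u) π) (.mk u (.frame t π))
  | frame (v : Val) (t : Trm) (π : Stk) :
      Red (.mk (.val v) (.frame t π)) (.mk t (.push v π))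
  | beta (x : ℕ) (t : Trm) (v : Val) (π : Stk) :
      Red (.mk (.val (.lam x t)) (.push v π)) (.mk (substTrm (subst1Lam x v) t) π)
  | mu (α : ℕ) (t : Trm) (π : Stk) :
      Red (.mk (.mu α t) π) (.mk (substTrm (subst1Mu α π) t) π)
  | prc (p : Proc) (π : Stk) :
      Red (.mk (.prc p) π) p
  | prj (fs : Flds) (l : ℕ) (v : Val) (π : Stk) :
      fs.lookup l = some v →
      Red (.mk (.prj (.rcd fs) l) π) (.mk (.val v) π)
  | cse (c : ℕ) (v : Val) (bs : Brs) (x : ℕ) (t : Trm) (π : Stk) :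
      bs.lookup c = some (x, t) →
      Red (.mk (.cse (.cns c v) bs) π) (.mk (substTrm (subst1Lam x v) t) π)

/-- k-fold application of a relation. -/
def iterRel (R : Proc → Proc → Prop) : ℕ → Proc → Proc → Prop
  | 0 => Eq
  | k + 1 => fun p r => ∃ q, R p q ∧ iterRel R k q r

/-- A process is final if it is of the form `v ∗ α`. -/
def Final (p : Proc) : Prop :=
  ∃ (v : Val) (α : ℕ), p = .mk (.val v) (.svar α)

/-- A process is δ-like if it is of the form `δ_{v,w} ∗ π`. -/
def DeltaLike (p : Proc) : Prop :=
  ∃ (v w : Val) (π : Stk), p = .mk (.dlt v w) π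

/-- A process is blocked if it has no (≻)-reduct. -/
def Blocked (p : Proc) : Prop := ¬ ∃ q, Red p q

/-- A process is stuck if it is neither final nor δ-like, and all its
    substitution instances are blocked. -/
def Stuck (p : Proc) : Prop :=
  ¬ Final p ∧ ¬ DeltaLike p ∧ ∀ σ : Subst, Blocked (substPrc σ p)

/-- A process is non-terminating if it reaches no blocked process. -/
def NonTerminating (p : Proc) : Prop :=
  ¬ ∃ q, Relation.ReflTransGen Red p q ∧ Blocked q

/-- `p ⇓_R`: the process `p` converges for the reduction relation `R`,
    i.e. it `R`-reduces to a final process. -/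
def ConvergesIn (R : Proc → Proc → Prop) (p : Proc) : Prop :=
  ∃ q, Relation.ReflTransGen R p q ∧ Final q

/-- The indexed reduction relation (↪ᵢ) = (≻) ∪ {(δ_{v,w} ∗ π, v ∗ π) | ∃ j < i, v ≢ⱼ w}.
    (The condition `v ≢ⱼ w` is inlined; it coincides with `¬ EquivI j v w` below.) -/
def RedI : ℕ → Proc → Proc → Prop
  | i => fun p q =>
      Red p q ∨
      ∃ (v w : Val) (π : Stk), p = .mk (.dlt v w) π ∧ q = .mk (.val v) π ∧
        ∃ j, ∃ _ : j < i,
          ¬ (∀ k, ∀ _ : k ≤ j, ∀ (π' : Stk) (σ : Subst),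
              ConvergesIn (RedI k) (.mk (substTrm σ (.val v)) π') ↔
              ConvergesIn (RedI k) (.mk (substTrm σ (.val w)) π'))
  termination_by i => i
  decreasing_by omega

/-- The indexed observational equivalence (≡ᵢ). -/
def EquivI (i : ℕ) (t u : Trm) : Prop :=
  ∀ j, j ≤ i → ∀ (π : Stk) (σ : Subst),
    ConvergesIn (RedI j) (.mk (substTrm σ t) π) ↔
    ConvergesIn (RedI j) (.mk (substTrm σ u) π)

/-- The reduction relation (↪) = ∪ᵢ (↪ᵢ). -/
def RedFull (p q : Proc) : Prop := ∃ i, RedI i p q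

/-- Observational equivalence (≡) = ∩ᵢ (≡ᵢ). -/
def Equiv (t u : Trm) : Prop := ∀ i, EquivI i t u

/-! ## The pole and orthogonality. -/

/-- The pole ⫫ = {p | p ⇓_↪}. -/
def Pole : Set Proc := {p | ConvergesIn RedFull p}

/-- Orthogonal of a set of values: φ^⊥ = {π | ∀ v ∈ φ, v ∗ π ∈ ⫫}. -/
def orth (φ : Set Val) : Set Stk :=
  {π | ∀ v ∈ φ, Proc.mk (.val v) π ∈ Pole}

/-- Bi-orthogonal of a set of values: φ^⊥⊥ = {t | ∀ π ∈ φ^⊥, t ∗ π ∈ ⫫}. -/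
def biorth (φ : Set Val) : Set Trm :=
  {t | ∀ π ∈ orth φ, Proc.mk t π ∈ Pole}

/-! ## Free variables and closedness. -/

/-- The kinds of variables: λ-variables, μ-variables, term variables,
    predicate variables. -/
inductive VKind : Type where
  | lam | mu | trm | prd
deriving DecidableEq

mutual
  /-- Free variables (of every kind) of a value. -/
  def fvVal : Val → Set (VKind × ℕ)
    | .var x => {(VKind.lam, x)}
    | .lam x t => fvTrm t \ {(VKind.lam, x)}
    | .cns _ v => fvVal v
    | .rcd fs => fvFlds fs
  /-- Free variables of record fields. -/
  def fvFlds : Flds → Set (VKind × ℕ)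
    | .nil => ∅
    | .cons _ v fs => fvVal v ∪ fvFlds fs
  /-- Free variables of a term. -/
  def fvTrm : Trm → Set (VKind × ℕ)
    | .tvar a => {(VKind.trm, a)}
    | .val v => fvVal v
    | .app t u => fvTrm t ∪ fvTrm u
    | .mu α t => fvTrm t \ {(VKind.mu, α)}
    | .prc p => fvPrc p
    | .prj v _ => fvVal v
    | .cse v bs => fvVal v ∪ fvBrs bs
    | .dlt v w => fvVal v ∪ fvVal w
  /-- Free variables of case branches. -/
  def fvBrs : Brs → Set (VKind × ℕ)
    | .nil => ∅
    | .cons _ x t bs => (fvTrm t \ {(VKind.lam, x)}) ∪ fvBrs bs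
  /-- Free variables of a stack. -/
  def fvStk : Stk → Set (VKind × ℕ)
    | .svar α => {(VKind.mu, α)}
    | .push v π => fvVal v ∪ fvStk π
    | .frame t π => fvTrm t ∪ fvStk π
  /-- Free variables of a process. -/
  def fvPrc : Proc → Set (VKind × ℕ)
    | .mk t π => fvTrm t ∪ fvStk π
end

/-- A term is closed if it contains no free variable of any kind. -/
def ClosedTrm (t : Trm) : Prop := fvTrm t = ∅

end CBV

namespace CBV

/-! Already at level 0, where `↪₀` is the deterministic relation `≻`, the stack
`[λz. case_z [C[x] → x]] α` separates the two values: against it `C[v]` reduces to the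
final process `v ∗ α`, while `D[w]` gets stuck on a `case` that has no branch for `D`. -/

theorem redI_zero : RedI 0 = Red := by
  funext p q
  rw [RedI]
  apply propext
  constructor
  · rintro (h | ⟨_, _, _, _, _, j, hj, _⟩)
    · exact h
    · omega
  · exact Or.inl

theorem Red.deterministic {p q r : Proc} (hq : Red p q) (hr : Red p r) : q = r := by
  cases hq <;> cases hr <;> simp_all

theorem Final.blocked {p : Proc} (hp : Final p) : Blocked p := by
  obtain ⟨v, α, rfl⟩ := hp
  rintro ⟨q, hq⟩
  cases hq

theorem not_convergesIn_red_of_blocked {p : Proc} (hb : Blocked p) (hp : ¬ Final p) :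
    ¬ ConvergesIn Red p := by
  rintro ⟨q, hpq, hq⟩
  rcases hpq.cases_head with rfl | ⟨r, hpr, -⟩
  · exact hp hq
  · exact hb ⟨r, hpr⟩

theorem convergesIn_red_iff_of_red {p q : Proc} (h : Red p q) :
    ConvergesIn Red p ↔ ConvergesIn Red q := by
  constructor
  · rintro ⟨r, hpr, hr⟩
    rcases hpr.cases_head with rfl | ⟨s, hps, hsr⟩
    · exact absurd ⟨q, h⟩ hr.blocked
    · exact ⟨r, h.deterministic hps ▸ hsr, hr⟩
  · rintro ⟨r, hqr, hr⟩
    exact ⟨r, .head h hqr, hr⟩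

theorem convergesIn_red_iff_of_reflTransGen {p q : Proc} (h : Relation.ReflTransGen Red p q) :
    ConvergesIn Red p ↔ ConvergesIn Red q := by
  induction h with
  | refl => rfl
  | tail _ hstep ih => exact ih.trans (convergesIn_red_iff_of_red hstep)

/-- The stack `[λz. case_z [C[x] → x]] α`, with `z = 0`, `x = 1` and `α = 0`. -/
def unwrapStk (C : ℕ) : Stk :=
  .frame (.val (.lam 0 (.cse (.var 0) (.cons C 1 (.val (.var 1)) .nil)))) (.svar 0)

theorem red_cns_unwrapStk (C D : ℕ) (w : Val) :
    Relation.ReflTransGen Red (.mk (.val (.cns D w)) (unwrapStk C))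
      (.mk (.cse (.cns D w) (.cons C 1 (.val (.var 1)) .nil)) (.svar 0)) := by
  refine .head (.frame _ _ _) (.single ?_)
  convert Red.beta _ _ _ _ using 2
  simp [substTrm, substVal, substBrs, subst1Lam, Subst.id, Subst.skipLam, Function.update]

theorem convergesIn_red_cns_unwrapStk (C : ℕ) (v : Val) :
    ConvergesIn Red (.mk (.val (.cns C v)) (unwrapStk C)) := by
  refine ⟨_, (red_cns_unwrapStk C C v).tail
    (Red.cse C v _ 1 (.val (.var 1)) (.svar 0) (by simp [Brs.lookup])), v, 0, ?_⟩
  simp [substTrm, substVal, subst1Lam]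

theorem not_convergesIn_red_cns_unwrapStk {C D : ℕ} (h : C ≠ D) (w : Val) :
    ¬ ConvergesIn Red (.mk (.val (.cns D w)) (unwrapStk C)) := by
  rw [convergesIn_red_iff_of_reflTransGen (red_cns_unwrapStk C D w)]
  refine not_convergesIn_red_of_blocked ?_ (by simp [Final])
  rintro ⟨q, hq⟩
  cases hq with
  | cse _ _ _ _ _ _ hlookup => simp [Brs.lookup, h] at hlookup

/-- Theorem 11: values built with distinct constructors are not
    observationally equivalent. -/
theorem distinct_constructors_not_equiv (C D : ℕ) (v w : Val) (h : C ≠ D) :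
    ¬ Equiv (.val (.cns C v)) (.val (.cns D w)) := by
  intro hequiv
  have hconv := hequiv 0 0 le_rfl (unwrapStk C) Subst.id
  simp only [substTrm, substVal, redI_zero] at hconv
  exact not_convergesIn_red_cns_unwrapStk h _ (hconv.mp (convergesIn_red_cns_unwrapStk C _))

end CBV
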